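/- Let K ⊆ ℝ≥0 be countable with 0 ∈ K a non-isolated point of K. Then the space U(K) of compact ultrametric spaces whose metrics take values in K, with the ultrametric Gromov–Hausdorff metric, is nowhere locally compact: no point of U(K) has a compact neighborhood. -/

import Mathlib

/-
Take a finite `ε`-net `s` of `X` and `c ∈ K` with `0 < c < ε` below every positive distance in
`s`. The sup metric on `X × Option ℕ`, with distinct points of `Option ℕ` at distance `c`, is
ultrametric with values in `K`, and contains `X` as `X × {none}`. Let `Yₙ` be `s × {none}`
together with the `n` points `(a, some i)`, `i < n`: it lies within `ε` of `X`, has `|s| + n`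
points and is `c`-separated. In an ultrametric space, a `c`-separated finite set injects into any
set at Hausdorff distance `< c` from it, so `Yₘ` and `Yₙ` are at distance `≥ c` for `m ≠ n`.
-/

/-- The ultrametric Gromov–Hausdorff distance: infimum of Hausdorff distances between
isometric copies of `X` and `Y` inside a common ultrametric space. -/
noncomputable def GHuDist (X Y : Type*) [MetricSpace X] [MetricSpace Y] : ℝ :=
  sInf { r : ℝ | ∃ (Z : Type) (_ : MetricSpace Z), IsUltrametricDist Z ∧
    ∃ (i : X → Z) (j : Y → Z), Isometry i ∧ Isometry j ∧
      Metric.hausdorffDist (Set.range i) (Set.range j) = r }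

open Metric Set Topology

instance Prod.isUltrametricDist {X Y : Type*} [PseudoMetricSpace X] [PseudoMetricSpace Y]
    [IsUltrametricDist X] [IsUltrametricDist Y] : IsUltrametricDist (X × Y) where
  dist_triangle_max p q r := by
    simp only [Prod.dist_eq]
    exact max_le
      ((dist_triangle_max _ q.1 _).trans (max_le_max (le_max_left _ _) (le_max_left _ _)))
      ((dist_triangle_max _ q.2 _).trans (max_le_max (le_max_right _ _) (le_max_right _ _)))

lemma isometry_prodMk_left {X Y : Type*} [PseudoMetricSpace X] [PseudoMetricSpace Y] (y : Y) :
    Isometry fun x : X => (x, y) :=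
  Isometry.of_dist_eq fun x x' => by simp [Prod.dist_eq]

lemma Finset.exists_pos_le_dist {X : Type*} [MetricSpace X] (s : Finset X) :
    ∃ r > 0, ∀ a ∈ s, ∀ b ∈ s, a ≠ b → r ≤ dist a b := by
  have hev : ∀ᶠ r in 𝓝[>] (0 : ℝ), ∀ p ∈ s.offDiag, r ≤ dist p.1 p.2 :=
    (Filter.eventually_all_finset _).2 fun p hp => (eventually_le_nhds
      (dist_pos.2 (Finset.mem_offDiag.1 hp).2.2)).filter_mono nhdsWithin_le_nhds
  obtain ⟨r, hr, hr0⟩ := (hev.and self_mem_nhdsWithin).exists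
  exact ⟨r, hr0, fun a ha b hb hab => hr (a, b) (Finset.mem_offDiag.2 ⟨ha, hb, hab⟩)⟩

/-- A type synonym for `α` carrying the metric in which distinct points are at distance `c`. -/
def Equidistant (α : Type*) (_c : ℝ) : Type _ := α

namespace Equidistant

variable {α : Type*} [DecidableEq α] {c : ℝ}

instance : DecidableEq (Equidistant α c) := ‹DecidableEq α›

variable [Fact (0 < c)]

instance : MetricSpace (Equidistant α c) where
  dist a b := if a = b then 0 else c
  dist_self a := if_pos rfl
  dist_comm a b := by simp only [eq_comm]
  dist_triangle a b d := by
    have := (Fact.out : 0 < c).le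
    split_ifs <;> simp_all
  eq_of_dist_eq_zero {a b} h := by
    by_contra hab
    simp only [if_neg hab] at h
    exact (Fact.out : 0 < c).ne' h

lemma dist_eq (a b : Equidistant α c) : dist a b = if a = b then 0 else c := rfl

lemma dist_le (a b : Equidistant α c) : dist a b ≤ c := by
  rw [dist_eq]
  split_ifs
  exacts [(Fact.out : 0 < c).le, le_rfl]

instance : IsUltrametricDist (Equidistant α c) where
  dist_triangle_max a b d := by
    have := (Fact.out : 0 < c).le
    simp only [dist_eq]
    split_ifs <;> simp_all

variable {X : Type*} [MetricSpace X]

lemma le_dist_of_snd_ne {p q : X × Equidistant α c} (h : p.2 ≠ q.2) : c ≤ dist p q := by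
  rw [Prod.dist_eq, dist_eq, if_neg h]
  exact le_max_right _ _

lemma dist_mem {S : Set ℝ} (h0 : 0 ∈ S) (hc : c ∈ S) (hX : ∀ x y : X, dist x y ∈ S)
    (p q : X × Equidistant α c) : dist p q ∈ S := by
  rw [Prod.dist_eq, dist_eq]
  rcases max_choice (dist p.1 q.1) (if p.2 = q.2 then 0 else c) with h | h <;> rw [h]
  · exact hX _ _
  · split_ifs
    exacts [h0, hc]

end Equidistant

/-- Two points of `A` sent to the same nearby point of `B` would, by the ultrametric inequality,
be closer than `c`. -/
lemma nat_card_le_of_hausdorffDist_lt {A B Z : Type*} [MetricSpace A] [MetricSpace Z]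
    [IsUltrametricDist Z] [Finite B] {c : ℝ} (hA : Pairwise fun a a' : A => c ≤ dist a a')
    {i : A → Z} {j : B → Z}
    (hi : Isometry i) (hfin : hausdorffEDist (range i) (range j) ≠ ⊤)
    (h : hausdorffDist (range i) (range j) < c) :
    Nat.card A ≤ Nat.card B := by
  have hclose : ∀ a, ∃ b, dist (i a) (j b) < c := fun a => by
    obtain ⟨_, ⟨b, rfl⟩, hb⟩ := exists_dist_lt_of_hausdorffDist_lt (mem_range_self a) h hfin
    exact ⟨b, hb⟩
  choose f hf using hclose
  refine Nat.card_le_card_of_injective f fun a a' hff => by_contra fun hne => ?_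
  have := calc
    c ≤ dist a a' := hA hne
    _ = dist (i a) (i a') := (hi.dist_eq a a').symm
    _ ≤ max (dist (i a) (j (f a))) (dist (j (f a)) (i a')) := dist_triangle_max _ _ _
    _ < c := max_lt (hf a) (by rw [hff, dist_comm]; exact hf a')
  exact lt_irrefl c this

section GHuDist

variable {A B : Type*} [MetricSpace A] [MetricSpace B]

lemma GHuDist_le_hausdorffDist {Z : Type} [MetricSpace Z] [IsUltrametricDist Z]
    {i : A → Z} {j : B → Z} (hi : Isometry i) (hj : Isometry j) :
    GHuDist A B ≤ hausdorffDist (range i) (range j) :=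
  csInf_le ⟨0, by rintro r ⟨Z, _, _, i, j, -, -, rfl⟩; exact hausdorffDist_nonneg⟩
    ⟨Z, inferInstance, inferInstance, i, j, hi, hj, rfl⟩

lemma le_GHuDist {Z : Type} [MetricSpace Z] [IsUltrametricDist Z]
    {i : A → Z} {j : B → Z} (hi : Isometry i) (hj : Isometry j) {r : ℝ}
    (h : ∀ (W : Type) [MetricSpace W] [IsUltrametricDist W] (i : A → W) (j : B → W),
      Isometry i → Isometry j → r ≤ hausdorffDist (range i) (range j)) :
    r ≤ GHuDist A B :=
  le_csInf ⟨_, Z, inferInstance, inferInstance, i, j, hi, hj, rfl⟩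
    (by rintro _ ⟨W, _, _, i, j, hi, hj, rfl⟩; exact h W i j hi hj)

lemma le_GHuDist_of_nat_card_ne [Finite A] [Finite B] [Nonempty A] [Nonempty B] {c : ℝ}
    (hA : Pairwise fun a a' : A => c ≤ dist a a') (hB : Pairwise fun b b' : B => c ≤ dist b b')
    (hcard : Nat.card A ≠ Nat.card B) {Z : Type} [MetricSpace Z] [IsUltrametricDist Z]
    {i : A → Z} {j : B → Z} (hi : Isometry i) (hj : Isometry j) :
    c ≤ GHuDist A B := by
  refine le_GHuDist hi hj fun W _ _ i j hi hj => not_lt.1 fun h => hcard ?_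
  have hfin : hausdorffEDist (range i) (range j) ≠ ⊤ :=
    hausdorffEDist_ne_top_of_nonempty_of_bounded (range_nonempty _) (range_nonempty _)
      (finite_range i).isBounded (finite_range j).isBounded
  exact le_antisymm (nat_card_le_of_hausdorffDist_lt hA hi hfin h)
    (nat_card_le_of_hausdorffDist_lt hB hj (by rwa [hausdorffEDist_comm])
      (by rwa [hausdorffDist_comm]))

end GHuDist

section AttachPoints

variable {X : Type} [DecidableEq X] (c : ℝ) (s : Finset X) (a : X) (n : ℕ)

def attachPoints : Finset (X × Equidistant (Option ℕ) c) :=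
  s.image (fun x => (x, none)) ∪ (Finset.range n).image (fun i => (a, some i))

variable {c s a n}

lemma mk_none_mem_attachPoints {x : X} (hx : x ∈ s) : (x, none) ∈ attachPoints c s a n :=
  Finset.mem_union_left _ (Finset.mem_image_of_mem _ hx)

lemma nat_card_attachPoints : Nat.card (attachPoints c s a n) = s.card + n := by
  rw [Nat.card_eq_finsetCard, attachPoints, Finset.card_union_of_disjoint,
    Finset.card_image_of_injective _ fun x y h => (Prod.ext_iff.1 h).1,
    Finset.card_image_of_injective _ fun i j h => Option.some_injective _ (Prod.ext_iff.1 h).2,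
    Finset.card_range]
  rw [Finset.disjoint_left]
  rintro _ hp hq
  obtain ⟨x, -, rfl⟩ := Finset.mem_image.1 hp
  obtain ⟨i, -, h⟩ := Finset.mem_image.1 hq
  exact Option.some_ne_none i (Prod.ext_iff.1 h).2

variable [MetricSpace X] [Fact (0 < c)]

lemma pairwise_le_dist_attachPoints (hs : ∀ x ∈ s, ∀ y ∈ s, x ≠ y → c ≤ dist x y) :
    Pairwise fun p q : attachPoints c s a n => c ≤ dist p q := by
  rintro ⟨p, hp⟩ ⟨q, hq⟩ hpq
  rw [Subtype.dist_eq]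
  by_cases h2 : p.2 = q.2
  · simp only [attachPoints, Finset.mem_union, Finset.mem_image] at hp hq
    rcases hp with ⟨x, hx, rfl⟩ | ⟨i, -, rfl⟩ <;>
      rcases hq with ⟨y, hy, rfl⟩ | ⟨j, -, rfl⟩
    · exact (hs x hx y hy fun h => hpq (by subst h; rfl)).trans (le_max_left _ _)
    all_goals simp_all
  · exact Equidistant.le_dist_of_snd_ne h2

lemma GHuDist_attachPoints_le [IsUltrametricDist X] {ε : ℝ} (hcε : c ≤ ε)
    (hs : ∀ x, ∃ y ∈ s, dist x y ≤ ε) : GHuDist X (attachPoints c s a n) ≤ ε := by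
  have hε : 0 ≤ ε := (Fact.out : 0 < c).le.trans hcε
  refine (GHuDist_le_hausdorffDist (isometry_prodMk_left (Y := Equidistant (Option ℕ) c) none)
    isometry_subtype_coe).trans (hausdorffDist_le_of_mem_dist hε ?_ ?_)
  · rintro _ ⟨x, rfl⟩
    obtain ⟨y, hy, hxy⟩ := hs x
    refine ⟨_, ⟨⟨_, mk_none_mem_attachPoints hy⟩, rfl⟩, ?_⟩
    rw [Prod.dist_eq, dist_self, max_eq_left dist_nonneg]
    exact hxy
  · rintro _ ⟨⟨p, hp⟩, rfl⟩
    simp only [attachPoints, Finset.mem_union, Finset.mem_image] at hp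
    rcases hp with ⟨x, -, rfl⟩ | ⟨i, -, rfl⟩
    · exact ⟨_, mem_range_self x, by simpa using hε⟩
    · refine ⟨_, mem_range_self a, ?_⟩
      rw [Prod.dist_eq, dist_self]
      exact max_le hε ((Equidistant.dist_le _ _).trans hcε)

end AttachPoints

theorem UK_nowhere_locally_compact_general (K : Set ℝ) (hK0 : (0:ℝ) ∈ K)
    (hKacc : ∀ δ : ℝ, 0 < δ → ∃ x ∈ K, 0 < x ∧ x < δ)
    (X : Type) [MetricSpace X] [CompactSpace X] [Nonempty X] [IsUltrametricDist X]
    (hX : ∀ p q : X, dist p q ∈ K) (ε : ℝ) (hε : 0 < ε) :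
    ∃ δ : ℝ, 0 < δ ∧
      ∃ (Y : ℕ → Type) (mY : ∀ n, MetricSpace (Y n)),
        (∀ n, letI := mY n; CompactSpace (Y n) ∧ Nonempty (Y n) ∧
          IsUltrametricDist (Y n) ∧ ∀ p q : Y n, dist p q ∈ K) ∧
        (∀ n, (letI := mY n; GHuDist X (Y n)) ≤ ε) ∧
        (∀ m n, m ≠ n → δ ≤ (letI := mY m; letI := mY n; GHuDist (Y m) (Y n))) := by
  classical
  obtain ⟨a⟩ := ‹Nonempty X›
  obtain ⟨s, hs⟩ := isCompact_univ.elim_finite_subcover (fun x : X => ball x ε)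
    (fun _ => isOpen_ball) fun x _ => mem_iUnion.2 ⟨x, mem_ball_self hε⟩
  have hnet : ∀ x : X, ∃ y ∈ s, dist x y ≤ ε := fun x => by
    obtain ⟨y, hy, hxy⟩ := mem_iUnion₂.1 (hs (mem_univ x))
    exact ⟨y, hy, (mem_ball.1 hxy).le⟩
  obtain ⟨μ, hμ, hsep⟩ := s.exists_pos_le_dist
  obtain ⟨c, hcK, hc, hcεμ⟩ := hKacc (min ε μ) (lt_min hε hμ)
  have : Fact (0 < c) := ⟨hc⟩
  have hsep_c : ∀ x ∈ s, ∀ y ∈ s, x ≠ y → c ≤ dist x y := fun x hx y hy hxy =>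
    (hcεμ.trans_le (min_le_right _ _)).le.trans (hsep x hx y hy hxy)
  have hY : ∀ n, Nonempty (attachPoints c s a n) := fun n =>
    let ⟨y, hy, _⟩ := hnet a; ⟨⟨_, mk_none_mem_attachPoints hy⟩⟩
  refine ⟨c, hc, fun n => attachPoints c s a n, fun n => inferInstance,
    fun n => ⟨inferInstance, hY n, inferInstance,
      fun p q => Equidistant.dist_mem hK0 hcK hX p.1 q.1⟩,
    fun n => GHuDist_attachPoints_le (hcεμ.trans_le (min_le_left _ _)).le hnet,
    fun m n hmn => le_GHuDist_of_nat_card_ne (pairwise_le_dist_attachPoints hsep_c)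
      (pairwise_le_dist_attachPoints hsep_c) ?_ isometry_subtype_coe isometry_subtype_coe⟩
  rw [nat_card_attachPoints, nat_card_attachPoints]
  omega

/-- For countable `K ⊆ ℝ≥0` with `0 ∈ K` non-isolated, the space `U(K)` of compact
ultrametric spaces with distances in `K` is nowhere locally compact: arbitrarily close
to any `X ∈ U(K)` there is an infinite uniformly separated family in `U(K)`,
so no point of `U(K)` has a compact neighborhood. -/
theorem UK_nowhere_locally_compact (K : Set ℝ) (hKc : K.Countable) (hK0 : (0:ℝ) ∈ K)
    (hKnn : ∀ x ∈ K, 0 ≤ x) (hKacc : ∀ δ : ℝ, 0 < δ → ∃ x ∈ K, 0 < x ∧ x < δ)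
    (X : Type) [MetricSpace X] [CompactSpace X] [Nonempty X] [IsUltrametricDist X]
    (hX : ∀ p q : X, dist p q ∈ K) (ε : ℝ) (hε : 0 < ε) :
    ∃ δ : ℝ, 0 < δ ∧
      ∃ (Y : ℕ → Type) (mY : ∀ n, MetricSpace (Y n)),
        (∀ n, letI := mY n; CompactSpace (Y n) ∧ Nonempty (Y n) ∧
          IsUltrametricDist (Y n) ∧ ∀ p q : Y n, dist p q ∈ K) ∧
        (∀ n, (letI := mY n; GHuDist X (Y n)) ≤ ε) ∧
        (∀ m n, m ≠ n → δ ≤ (letI := mY m; letI := mY n; GHuDist (Y m) (Y n))) :=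
  UK_nowhere_locally_compact_general K hK0 hKacc X hX ε hε
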